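/- Let U be a d×d complex unitary matrix (d ≥ 1). Define its l1 cohering power c₁ = max over columns j of ((∑_i |U_{ij}|)² − 1) and its relative-entropy cohering power c_r = max over columns j of (−∑_i |U_{ij}|² log₂ |U_{ij}|²). Then c₁ ≥ c_r and c₁ ≥ 2^{c_r} − 1; that is, c₁ ≥ max{c_r, 2^{c_r} − 1}. -/

import Mathlib

open Matrix BigOperators ComplexOrder

/-- The l1-coherence of a matrix: the sum of the absolute values of its
off-diagonal entries. -/
noncomputable def Cl1 {n : ℕ} (A : Matrix (Fin n) (Fin n) ℂ) : ℝ :=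
  ∑ i, ∑ j, if i ≠ j then ‖A i j‖ else 0

/-- A density matrix: positive semidefinite with trace 1. -/
def IsDensity {n : ℕ} (ρ : Matrix (Fin n) (Fin n) ℂ) : Prop :=
  ρ.PosSemidef ∧ ρ.trace = 1

/-- A quantum operation (CPTP map) given by a finite family of Kraus operators. -/
def IsQuantumOp {n : ℕ} (Φ : Matrix (Fin n) (Fin n) ℂ → Matrix (Fin n) (Fin n) ℂ) : Prop :=
  ∃ (m : ℕ) (K : Fin m → Matrix (Fin n) (Fin n) ℂ),
    (∑ i, (K i)ᴴ * K i) = 1 ∧ ∀ ρ, Φ ρ = ∑ i, K i * ρ * (K i)ᴴ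

/-- The dephasing map `Δ`, keeping only the diagonal part of a matrix. -/
def Deph {n : ℕ} (A : Matrix (Fin n) (Fin n) ℂ) : Matrix (Fin n) (Fin n) ℂ :=
  Matrix.of fun i j => if i = j then A i j else 0

/-!
Entropies are in nats; for a column of `U` put `a i = ‖U i j‖` and `p i = a i ^ 2`, so `∑ p = 1`.

The bound `exp H ≤ (∑ a)²` is Gibbs' inequality: `log x ≤ x - 1` at `x = 1 / (a i ∑ a)`, weighted
by `p i`.

For `H ≤ log 2 * ((∑ a)² - 1)`, write `-p i log p i = p i log ((p i + ∑_{k ≠ i} p k) / p i)`, which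
is at most `∑_{k ≠ i} p i log ((p i + p k) / p i)` by subadditivity. Symmetrizing in `(i, k)` leaves
pairs `p log ((p + q) / p) + q log ((p + q) / q) = (p + q) h (p / (p + q))`, and the binary-entropy
estimate `h t ≤ 2 log 2 √(t (1 - t))` bounds each pair by `2 log 2 a i a k`. That estimate is a sign
argument: in the variable `u = 1 - 2t` the gap vanishes at `u = 0` and `u = 1`, and its derivative
is first nonnegative and then nonpositive, since the derivative of the derivative has the sign of
`√(1 - u²) - log 2`.
-/

open Set Real

def NonnegThenNonposOn (g : ℝ → ℝ) (s : Set ℝ) : Prop :=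
  ∀ x ∈ s, ∀ y ∈ s, x ≤ y → g x < 0 → g y ≤ 0

section SignPattern

variable {f f' : ℝ → ℝ} {a b : ℝ}

theorem NonnegThenNonposOn.mono {g : ℝ → ℝ} {s t : Set ℝ} (hg : NonnegThenNonposOn g s)
    (hts : t ⊆ s) : NonnegThenNonposOn g t :=
  fun x hx y hy hxy hgx => hg x (hts hx) y (hts hy) hxy hgx

theorem le_or_antitoneOn_of_hasDerivAt (hf : ContinuousOn f (Icc a b))
    (hderiv : ∀ x ∈ Ioo a b, HasDerivAt f (f' x) x) (hsign : NonnegThenNonposOn f' (Ioo a b))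
    {w : ℝ} (hw : w ∈ Icc a b) : f a ≤ f w ∨ AntitoneOn f (Icc w b) := by
  by_cases h : ∀ x ∈ Ioo a w, 0 ≤ f' x
  · left
    have hmono : MonotoneOn f (Icc a w) := by
      refine monotoneOn_of_hasDerivWithinAt_nonneg (f' := f') (convex_Icc a w)
        (hf.mono (Icc_subset_Icc_right hw.2)) (fun x hx => ?_) (fun x hx => ?_)
      · rw [interior_Icc] at hx ⊢
        exact (hderiv x ⟨hx.1, hx.2.trans_le hw.2⟩).hasDerivWithinAt
      · rw [interior_Icc] at hx
        exact h x hx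
    exact hmono (left_mem_Icc.2 hw.1) (right_mem_Icc.2 hw.1) hw.1
  · right
    simp only [not_forall, not_le] at h
    obtain ⟨v, hv, hfv⟩ := h
    refine antitoneOn_of_hasDerivWithinAt_nonpos (f' := f') (convex_Icc w b)
      (hf.mono (Icc_subset_Icc_left hw.1)) (fun x hx => ?_) (fun x hx => ?_)
    · rw [interior_Icc] at hx ⊢
      exact (hderiv x ⟨hw.1.trans_lt hx.1, hx.2⟩).hasDerivWithinAt
    · rw [interior_Icc] at hx
      exact hsign v ⟨hv.1, hv.2.trans_le hw.2⟩ x ⟨hw.1.trans_lt hx.1, hx.2⟩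
        (hv.2.le.trans hx.1.le) hfv

theorem nonneg_of_hasDerivAt_of_nonnegThenNonposOn (hf : ContinuousOn f (Icc a b))
    (hderiv : ∀ x ∈ Ioo a b, HasDerivAt f (f' x) x) (hsign : NonnegThenNonposOn f' (Ioo a b))
    (ha : 0 ≤ f a) (hb : 0 ≤ f b) {x : ℝ} (hx : x ∈ Icc a b) : 0 ≤ f x := by
  rcases le_or_antitoneOn_of_hasDerivAt hf hderiv hsign hx with h | h
  · exact ha.trans h
  · exact hb.trans (h (left_mem_Icc.2 hx.2) (right_mem_Icc.2 hx.2) hx.2)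

theorem nonnegThenNonposOn_of_hasDerivAt (hf : ContinuousOn f (Ico a b))
    (hderiv : ∀ x ∈ Ioo a b, HasDerivAt f (f' x) x) (hsign : NonnegThenNonposOn f' (Ioo a b))
    (ha : 0 ≤ f a) : NonnegThenNonposOn f (Ioo a b) := by
  intro x hx y hy hxy hfx
  rcases le_or_antitoneOn_of_hasDerivAt (hf.mono (Icc_subset_Ico_right hy.2))
      (fun z hz => hderiv z ⟨hz.1, hz.2.trans hy.2⟩) (hsign.mono (Ioo_subset_Ioo_right hy.2.le))
      ⟨hx.1.le, hxy⟩ with h | h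
  · linarith
  · exact (h ⟨le_rfl, hxy⟩ ⟨hxy, le_rfl⟩ hxy).trans hfx.le

end SignPattern

-- With `t = (1 - u) / 2` this is `2 log 2 √(t (1 - t)) - binEntropy t`.
noncomputable def binEntropyGap (u : ℝ) : ℝ :=
  log 2 * √(1 - u ^ 2) - binEntropy ((1 - u) / 2)

noncomputable def binEntropyGapDeriv (u : ℝ) : ℝ :=
  (log ((1 + u) / 2) - log ((1 - u) / 2)) / 2 - log 2 * (u / √(1 - u ^ 2))

section BinEntropyGap

variable {u : ℝ}

theorem hasDerivAt_sqrt_one_sub_sq (hu : u ∈ Ioo (-1) 1) :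
    HasDerivAt (fun u => √(1 - u ^ 2)) (-u / √(1 - u ^ 2)) u := by
  have h : 0 < 1 - u ^ 2 := by nlinarith [hu.1, hu.2]
  convert ((hasDerivAt_pow 2 u).const_sub 1).sqrt h.ne' using 1
  field_simp
  ring

theorem hasDerivAt_binEntropyGap (hu : u ∈ Ioo (-1) 1) :
    HasDerivAt binEntropyGap (binEntropyGapDeriv u) u := by
  have hlin : HasDerivAt (fun u : ℝ => (1 - u) / 2) (-1 / 2) u := by
    simpa using ((hasDerivAt_id' u).const_sub 1).div_const 2
  have hH := (hasDerivAt_binEntropy (p := (1 - u) / 2) (by linarith [hu.2])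
    (by linarith [hu.1])).comp u hlin
  have := ((hasDerivAt_sqrt_one_sub_sq hu).const_mul (log 2)).sub hH
  refine this.congr_deriv ?_
  rw [binEntropyGapDeriv, show 1 - (1 - u) / 2 = (1 + u) / 2 by ring]
  ring

theorem hasDerivAt_binEntropyGapDeriv (hu : u ∈ Ioo (-1) 1) :
    HasDerivAt binEntropyGapDeriv
      ((√(1 - u ^ 2) - log 2) / ((1 - u ^ 2) * √(1 - u ^ 2))) u := by
  have h : 0 < 1 - u ^ 2 := by nlinarith [hu.1, hu.2]
  have hs : 0 < √(1 - u ^ 2) := sqrt_pos.2 h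
  have h1 : HasDerivAt (fun u : ℝ => log ((1 + u) / 2)) (1 / (1 + u)) u := by
    have := (((hasDerivAt_id' u).const_add 1).div_const 2).log (by linarith [hu.1])
    refine this.congr_deriv ?_
    field_simp
  have h2 : HasDerivAt (fun u : ℝ => log ((1 - u) / 2)) (-1 / (1 - u)) u := by
    have := (((hasDerivAt_id' u).const_sub 1).div_const 2).log (by linarith [hu.2])
    refine this.congr_deriv ?_
    field_simp
  have h3 := (hasDerivAt_id' u).div (hasDerivAt_sqrt_one_sub_sq hu) hs.ne'
  have := ((h1.sub h2).div_const 2).sub (h3.const_mul (log 2))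
  refine this.congr_deriv ?_
  have hsq : √(1 - u ^ 2) ^ 2 = 1 - u ^ 2 := sq_sqrt h.le
  have h1u : 1 + u ≠ 0 := by linarith [hu.1]
  have h2u : 1 - u ≠ 0 := by linarith [hu.2]
  field_simp
  linear_combination (1 - u ^ 2) * (2 * u ^ 2 * log 2) * hsq

theorem nonnegThenNonposOn_binEntropyGapDeriv :
    NonnegThenNonposOn binEntropyGapDeriv (Ioo 0 1) := by
  have hIoo : ∀ {x : ℝ}, x ∈ Ico 0 1 → x ∈ Ioo (-1) 1 := fun hx => ⟨by linarith [hx.1], hx.2⟩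
  refine nonnegThenNonposOn_of_hasDerivAt
    (fun x hx => (hasDerivAt_binEntropyGapDeriv (hIoo hx)).continuousAt.continuousWithinAt)
    (fun x hx => hasDerivAt_binEntropyGapDeriv (hIoo (Ioo_subset_Ico_self hx))) ?_
    (by simp [binEntropyGapDeriv])
  intro x hx y hy hxy hneg
  have hpos : ∀ z ∈ Ioo (0 : ℝ) 1, 0 < (1 - z ^ 2) * √(1 - z ^ 2) := fun z hz => by
    have : 0 < 1 - z ^ 2 := by nlinarith [hz.1, hz.2]
    positivity
  have hx' : √(1 - x ^ 2) < log 2 := by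
    have := (div_neg_iff.1 hneg).resolve_left (fun h => (hpos x hx).not_gt h.2)
    linarith [this.1]
  have hyx : √(1 - y ^ 2) ≤ √(1 - x ^ 2) := Real.sqrt_le_sqrt (by nlinarith [hx.1])
  exact div_nonpos_of_nonpos_of_nonneg (by linarith) (hpos y hy).le

theorem binEntropyGap_nonneg (hu : u ∈ Icc 0 1) : 0 ≤ binEntropyGap u := by
  refine nonneg_of_hasDerivAt_of_nonnegThenNonposOn (f' := binEntropyGapDeriv)
    (by unfold binEntropyGap; fun_prop)
    (fun x hx => hasDerivAt_binEntropyGap ⟨by linarith [hx.1], hx.2⟩)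
    nonnegThenNonposOn_binEntropyGapDeriv ?_ ?_ hu
  · rw [binEntropyGap, show (1 - 0 : ℝ) / 2 = 2⁻¹ by norm_num, binEntropy_two_inv]
    simp
  · norm_num [binEntropyGap]

end BinEntropyGap

theorem Real.binEntropy_le_two_mul_log_two_mul_sqrt {t : ℝ} (ht : t ∈ Icc 0 1) :
    binEntropy t ≤ 2 * log 2 * √(t * (1 - t)) := by
  wlog hhalf : t ≤ 2⁻¹ generalizing t
  · have := this (t := 1 - t) ⟨by linarith [ht.2], by linarith [ht.1]⟩ (by linarith)
    rwa [binEntropy_one_sub, sub_sub_cancel, mul_comm (1 - t)] at this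
  have hgap := binEntropyGap_nonneg (u := 1 - 2 * t) ⟨by linarith, by linarith [ht.1]⟩
  rw [binEntropyGap, show (1 - (1 - 2 * t)) / 2 = t by ring,
    show 1 - (1 - 2 * t) ^ 2 = 2 ^ 2 * (t * (1 - t)) by ring,
    Real.sqrt_mul (by norm_num), Real.sqrt_sq (by norm_num)] at hgap
  linarith

theorem mul_log_add_div_add_mul_log_add_div_le {p q : ℝ} (hp : 0 ≤ p) (hq : 0 ≤ q) :
    p * log ((p + q) / p) + q * log ((p + q) / q) ≤ 2 * log 2 * √(p * q) := by
  rcases (add_nonneg hp hq).eq_or_lt with h | h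
  · obtain ⟨rfl, rfl⟩ : p = 0 ∧ q = 0 := ⟨by linarith, by linarith⟩
    simp
  set t := p / (p + q)
  have ht : t ∈ Icc 0 1 := ⟨div_nonneg hp h.le, div_le_one_of_le₀ (by linarith) h.le⟩
  have hpt : t * (p + q) = p := div_mul_cancel₀ _ h.ne'
  have hsub : 1 - t = q / (p + q) := by
    rw [eq_div_iff h.ne', sub_mul, one_mul, hpt]
    ring
  have hentropy : binEntropy t * (p + q) = p * log ((p + q) / p) + q * log ((p + q) / q) := by
    have hqt : q / (p + q) * (p + q) = q := div_mul_cancel₀ _ h.ne'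
    rw [binEntropy, hsub, inv_div, inv_div, add_mul, mul_right_comm, hpt, mul_right_comm, hqt]
  have hsqrt : √(t * (1 - t)) * (p + q) = √(p * q) := by
    rw [hsub, div_mul_div_comm, ← sq, Real.sqrt_div' _ (sq_nonneg _), Real.sqrt_sq h.le,
      div_mul_cancel₀ _ h.ne']
  rw [← hentropy, ← hsqrt, ← mul_assoc]
  exact mul_le_mul_of_nonneg_right (binEntropy_le_two_mul_log_two_mul_sqrt ht) h.le

theorem mul_log_add_sum_div_le_sum {ι : Type*} {p : ℝ} (hp : 0 ≤ p) (s : Finset ι) {q : ι → ℝ}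
    (hq : ∀ i ∈ s, 0 ≤ q i) :
    p * log ((p + ∑ i ∈ s, q i) / p) ≤ ∑ i ∈ s, p * log ((p + q i) / p) := by
  refine Finset.le_sum_of_subadditive_on_pred (fun x => p * log ((p + x) / p)) (0 ≤ ·)
    (by simp) (fun x y hx hy => ?_) (fun _ _ => add_nonneg) q hq
  rcases hp.eq_or_lt with rfl | hp
  · simp
  rw [← mul_add, ← log_mul (by positivity) (by positivity)]
  refine mul_le_mul_of_nonneg_left (log_le_log (by positivity) ?_) hp.le
  rw [div_mul_div_comm, div_le_div_iff₀ hp (by positivity)]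
  nlinarith [mul_nonneg hx hy]

open Finset in
theorem neg_mul_log_le_sum_erase_mul_log_add_div {ι : Type*} [Fintype ι] [DecidableEq ι]
    {p : ι → ℝ} (hp : ∀ i, 0 ≤ p i) (hsum : ∑ i, p i = 1) (i : ι) :
    -(p i * log (p i)) ≤ ∑ k ∈ univ.erase i, p i * log ((p i + p k) / p i) :=
  calc -(p i * log (p i)) = p i * log ((p i + ∑ k ∈ univ.erase i, p k) / p i) := by
        rw [add_sum_erase _ _ (mem_univ i), hsum, one_div, log_inv, mul_neg]
    _ ≤ _ := mul_log_add_sum_div_le_sum (hp i) _ fun k _ => hp k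

open Finset in
theorem sum_neg_sq_mul_log_sq_le_log_two_mul {ι : Type*} [Fintype ι] {a : ι → ℝ}
    (ha : ∀ i, 0 ≤ a i) (hsum : ∑ i, a i ^ 2 = 1) :
    ∑ i, -(a i ^ 2 * log (a i ^ 2)) ≤ log 2 * ((∑ i, a i) ^ 2 - 1) := by
  classical
  set p : ι → ℝ := fun i => a i ^ 2
  set f : ι → ι → ℝ := fun i k => p i * log ((p i + p k) / p i)
  have hrow (i : ι) : -(p i * log (p i)) + log 2 * p i ≤ ∑ k, f i k := by
    have hdiag : f i i = log 2 * p i := by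
      rcases eq_or_ne (p i) 0 with h | h
      · simp [f, h]
      · simp only [f]
        rw [show p i + p i = p i * 2 by ring, mul_div_cancel_left₀ _ h, mul_comm]
    rw [← add_sum_erase _ _ (mem_univ i), hdiag, add_comm (log 2 * p i)]
    exact add_le_add_left (neg_mul_log_le_sum_erase_mul_log_add_div (p := p)
      (fun k => sq_nonneg _) hsum i) _
  have hpair (i k : ι) : f i k + f k i ≤ 2 * (log 2 * (a i * a k)) := by
    have := mul_log_add_div_add_mul_log_add_div_le (sq_nonneg (a i)) (sq_nonneg (a k))
    rw [← mul_pow, Real.sqrt_sq (mul_nonneg (ha i) (ha k))] at this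
    simp only [f, p, add_comm (a k ^ 2)]
    linarith
  have hsymm : 2 * ∑ i, ∑ k, f i k = ∑ i, ∑ k, (f i k + f k i) := by
    simp only [sum_add_distrib]
    rw [sum_comm (f := fun i k => f k i)]
    ring
  have hcross : ∑ i, ∑ k, log 2 * (a i * a k) = log 2 * (∑ i, a i) ^ 2 := by
    simp only [← mul_sum, sq, sum_mul_sum]
  have hle : 2 * ∑ i, ∑ k, f i k ≤ 2 * (log 2 * (∑ i, a i) ^ 2) := by
    rw [hsymm, ← hcross, mul_sum]
    exact sum_le_sum fun i _ => (sum_le_sum fun k _ => hpair i k).trans_eq (mul_sum ..).symm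
  have hrows : ∑ i, -(p i * log (p i)) + log 2 ≤ ∑ i, ∑ k, f i k := by
    calc ∑ i, -(p i * log (p i)) + log 2 = ∑ i, (-(p i * log (p i)) + log 2 * p i) := by
          rw [sum_add_distrib, ← mul_sum, hsum, mul_one]
      _ ≤ _ := sum_le_sum fun i _ => hrow i
  linarith

theorem neg_sq_mul_log_sq_le {a S : ℝ} (ha : 0 ≤ a) (hS : 0 < S) :
    -(a ^ 2 * log (a ^ 2)) ≤ 2 * (a / S - a ^ 2 + a ^ 2 * log S) := by
  rcases ha.eq_or_lt with rfl | ha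
  · simp
  have h := log_le_sub_one_of_pos (inv_pos.2 (mul_pos ha hS))
  rw [log_inv, log_mul ha.ne' hS.ne'] at h
  have h' := mul_le_mul_of_nonneg_left h (sq_nonneg a)
  rw [show a ^ 2 * ((a * S)⁻¹ - 1) = a / S - a ^ 2 by field_simp] at h'
  rw [log_pow]
  push_cast
  linarith

open Finset in
theorem exp_sum_neg_sq_mul_log_sq_le_sq_sum {ι : Type*} [Fintype ι] {a : ι → ℝ}
    (ha : ∀ i, 0 ≤ a i) (hsum : ∑ i, a i ^ 2 = 1) :
    exp (∑ i, -(a i ^ 2 * log (a i ^ 2))) ≤ (∑ i, a i) ^ 2 := by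
  set S := ∑ i, a i
  have hS : 0 < S := by
    have := sum_sq_le_sq_sum_of_nonneg (s := univ) fun i _ => ha i
    nlinarith [(Finset.sum_nonneg fun i _ => ha i : 0 ≤ S)]
  have hentropy : ∑ i, -(a i ^ 2 * log (a i ^ 2)) ≤ log (S ^ 2) :=
    calc ∑ i, -(a i ^ 2 * log (a i ^ 2)) ≤ ∑ i, 2 * (a i / S - a i ^ 2 + a i ^ 2 * log S) :=
          sum_le_sum fun i _ => neg_sq_mul_log_sq_le (ha i) hS
      _ = log (S ^ 2) := by
          rw [← mul_sum, sum_add_distrib, sum_sub_distrib, ← sum_div, ← sum_mul, hsum,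
            div_self hS.ne', log_pow]
          push_cast
          ring
  exact (exp_le_exp.2 hentropy).trans_eq (exp_log (by positivity))

theorem Matrix.sum_norm_sq_eq_one_of_conjTranspose_mul_self_eq_one {n 𝕜 : Type*} [Fintype n]
    [DecidableEq n] [RCLike 𝕜] {U : Matrix n n 𝕜} (hU : Uᴴ * U = 1) (j : n) :
    ∑ i, ‖U i j‖ ^ 2 = 1 := by
  have h := congr_fun₂ hU j j
  simp only [mul_apply, conjTranspose_apply, RCLike.star_def, RCLike.conj_mul, one_apply_eq] at h
  exact_mod_cast h

theorem sum_neg_mul_logb_two_eq_div {ι : Type*} [Fintype ι] (p : ι → ℝ) :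
    ∑ i, -(p i * logb 2 (p i)) = (∑ i, -(p i * log (p i))) / log 2 := by
  simp only [logb, Finset.sum_div, neg_div, mul_div_assoc]

theorem l1_cohering_power_ge_relent_cohering_power
    (d : ℕ) (U : Matrix (Fin d) (Fin d) ℂ)
    (hU : Uᴴ * U = 1 ∧ U * Uᴴ = 1) (c1 cr : ℝ)
    (hc1 : IsGreatest
      {x : ℝ | ∃ j : Fin d, x = (∑ i, ‖U i j‖) ^ 2 - 1} c1)
    (hcr : IsGreatest
      {x : ℝ | ∃ j : Fin d,
        x = ∑ i, -(‖U i j‖ ^ 2 * Real.logb 2 (‖U i j‖ ^ 2))} cr) :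
    cr ≤ c1 ∧ (2 : ℝ) ^ cr - 1 ≤ c1 := by
  obtain ⟨j, rfl⟩ := hcr.1
  set a : Fin d → ℝ := fun i => ‖U i j‖
  have ha (i : Fin d) : 0 ≤ a i := norm_nonneg _
  have hsum : ∑ i, a i ^ 2 = 1 := Matrix.sum_norm_sq_eq_one_of_conjTranspose_mul_self_eq_one hU.1 j
  have hc1j : (∑ i, a i) ^ 2 - 1 ≤ c1 := hc1.2 ⟨j, rfl⟩
  have hlog2 : 0 < log 2 := log_pos one_lt_two
  rw [sum_neg_mul_logb_two_eq_div fun i => a i ^ 2]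
  constructor
  · rw [div_le_iff₀ hlog2, mul_comm]
    exact (sum_neg_sq_mul_log_sq_le_log_two_mul ha hsum).trans
      (mul_le_mul_of_nonneg_left hc1j hlog2.le)
  · rw [rpow_def_of_pos two_pos, mul_div_cancel₀ _ hlog2.ne']
    linarith [exp_sum_neg_sq_mul_log_sq_le_sq_sum ha hsum]
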